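/- Define a family of power series N(k) ∈ ℤ[[z]] for k ∈ ℤ by the recursion N(k+1) - N(k-1) = z·N(k), together with initial data N(0) = 0 and N(1) = 1. Then for every integer p, N(2p) = Φ(p,z) = Σ_{i≥0} C(p+i, 2i+1) z^{2i+1}, i.e., N(2p) = pz + (1/6)p(p²-1)z³ + ⋯. -/

import Mathlib

/-- Φ(t,z) = Σ_{i≥0} C(t+i, 2i+1) z^{2i+1} in ℤ[[z]]. -/
noncomputable def Phi (t : ℤ) : PowerSeries ℤ :=
  PowerSeries.mk fun n => if n % 2 = 1 then Ring.choose (t + (n / 2 : ℕ)) n else 0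

/-- Ψ(t,z) = Σ_{i≥0} C(t+i, 2i) z^{2i} in ℤ[[z]]. -/
noncomputable def Psi (t : ℤ) : PowerSeries ℤ :=
  PowerSeries.mk fun n => if n % 2 = 0 then Ring.choose (t + (n / 2 : ℕ)) n else 0

open PowerSeries

lemma phi_zero : Phi 0 = 0 := by
  ext n
  simp only [Phi, coeff_mk, map_zero]
  split_ifs with h
  · have hn : n / 2 < n := by omega
    have : ((0 : ℤ) + (n / 2 : ℕ)) = ((n / 2 : ℕ) : ℤ) := by push_cast; ring
    rw [this, Ring.choose_natCast, Nat.choose_eq_zero_of_lt hn, Nat.cast_zero]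
  · rfl

lemma psi_zero : Psi 0 = 1 := by
  ext n
  simp only [Psi, coeff_mk, coeff_one]
  rcases Nat.eq_zero_or_pos n with rfl | hn
  · simp [Ring.choose_zero_right]
  · have : n ≠ 0 := hn.ne'
    simp only [this, if_false]
    split_ifs with h
    · have hn2 : n / 2 < n := by omega
      have : ((0 : ℤ) + (n / 2 : ℕ)) = ((n / 2 : ℕ) : ℤ) := by push_cast; ring
      rw [this, Ring.choose_natCast, Nat.choose_eq_zero_of_lt hn2, Nat.cast_zero]
    · rfl

lemma phi_step (p : ℤ) : Phi (p + 1) = Phi p + PowerSeries.X * Psi p := by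
  ext n
  rw [map_add]
  cases n with
  | zero => simp [Phi]
  | succ m =>
    rw [coeff_succ_X_mul]
    simp only [Phi, Psi, coeff_mk]
    rcases Nat.even_or_odd m with ⟨i, hi⟩ | ⟨i, hi⟩
    · -- m = 2i, n = 2i+1 odd
      subst hi
      have h1 : (i + i + 1) % 2 = 1 := by omega
      have h2 : (i + i) % 2 = 0 := by omega
      have h3 : (i + i + 1) / 2 = i := by omega
      have h4 : (i + i) / 2 = i := by omega
      simp only [h1, h2, h3, h4, if_true]
      have pascal := Ring.choose_succ_succ (p + (i : ℤ)) (i + i)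
      have e1 : p + 1 + (i : ℤ) = (p + i) + 1 := by ring
      have e2 : i + i + 1 = (i + i) + 1 := rfl
      rw [e1, e2, pascal]
      ring
    · -- m = 2i+1, n even
      subst hi
      have h1 : (2 * i + 1 + 1) % 2 = 0 := by omega
      have h2 : (2 * i + 1) % 2 = 1 := by omega
      simp only [h1, h2]
      norm_num

lemma psi_step (p : ℤ) : Psi (p + 1) = Psi p + PowerSeries.X * Phi (p + 1) := by
  ext n
  rw [map_add]
  cases n with
  | zero => simp [Psi]
  | succ m =>
    rw [coeff_succ_X_mul]
    simp only [Phi, Psi, coeff_mk]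
    rcases Nat.even_or_odd m with ⟨i, hi⟩ | ⟨i, hi⟩
    · subst hi
      have h1 : (i + i + 1) % 2 = 1 := by omega
      have h2 : (i + i) % 2 = 0 := by omega
      simp only [h1, h2]
      norm_num
    · -- m = 2i+1, n = 2i+2 even
      subst hi
      have h1 : (2 * i + 1 + 1) % 2 = 0 := by omega
      have h2 : (2 * i + 1) % 2 = 1 := by omega
      have h3 : (2 * i + 1 + 1) / 2 = i + 1 := by omega
      have h4 : (2 * i + 1) / 2 = i := by omega
      simp only [h1, h2, h3, h4, if_true]
      have pascal := Ring.choose_succ_succ (p + (i + 1 : ℕ) : ℤ) (2 * i + 1)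
      have e1 : p + 1 + ((i : ℤ) + 1) = (p + ((i:ℤ) + 1)) + 1 := by ring
      have e2 : 2 * i + 1 + 1 = (2 * i + 1) + 1 := rfl
      push_cast at pascal ⊢
      rw [e1, e2, pascal]
      have e3 : p + ((i : ℤ) + 1) = p + 1 + (i:ℤ) := by ring
      rw [e3]
      ring

theorem N_even (N : ℤ → PowerSeries ℤ)
    (hrec : ∀ k : ℤ, N (k + 1) - N (k - 1) = PowerSeries.X * N k)
    (h0 : N 0 = 0) (h1 : N 1 = 1) :
    ∀ p : ℤ, N (2 * p) = Phi p := by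
  have key : ∀ p : ℤ, N (2 * p) = Phi p ∧ N (2 * p + 1) = Psi p := by
    intro p
    induction p using Int.induction_on with
    | zero => exact ⟨by simpa [phi_zero] using h0, by simpa [psi_zero] using h1⟩
    | succ p ih =>
      obtain ⟨he, ho⟩ := ih
      have r1 := hrec (2 * p + 1)
      have r2 := hrec (2 * p + 2)
      have e1 : (2 * p + 1 : ℤ) + 1 = 2 * (p + 1) := by ring
      have e2 : (2 * p + 1 : ℤ) - 1 = 2 * p := by ring
      have e3 : (2 * p + 2 : ℤ) + 1 = 2 * (p + 1) + 1 := by ring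
      have e4 : (2 * p + 2 : ℤ) - 1 = 2 * p + 1 := by ring
      have e5 : (2 * p + 2 : ℤ) = 2 * (p + 1) := by ring
      rw [e1, e2] at r1
      rw [e3, e4, e5] at r2
      have hNe : N (2 * (p + 1)) = Phi (p + 1) := by
        rw [phi_step]
        have := sub_eq_iff_eq_add.mp r1
        rw [this, he, ho]; ring
      refine ⟨hNe, ?_⟩
      rw [psi_step]
      have := sub_eq_iff_eq_add.mp r2
      rw [this, ho, hNe]; ring
    | pred p ih =>
      obtain ⟨he, ho⟩ := ih
      have r1 := hrec (-2 * p)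
      have r2 := hrec (-2 * p - 1)
      have e1 : (-2 * p : ℤ) + 1 = 2 * (-p) + 1 := by ring
      have e2 : (-2 * p : ℤ) - 1 = 2 * (-p - 1) + 1 := by ring
      have e3 : (-2 * p : ℤ) = 2 * (-p) := by ring
      have e4 : (-2 * p - 1 : ℤ) + 1 = 2 * (-p) := by ring
      have e5 : (-2 * p - 1 : ℤ) - 1 = 2 * (-p - 1) := by ring
      have e6 : (-2 * p - 1 : ℤ) = 2 * (-p - 1) + 1 := by ring
      rw [e1, e2, e3] at r1
      rw [e4, e5, e6] at r2
      have hNo : N (2 * (-p - 1) + 1) = Psi (-p - 1) := by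
        have := (sub_eq_iff_eq_add.mp r1)
        -- N(2*(-p)+1) = X * N(2*(-p)) + N(2*(-p-1)+1)
        have h' : N (2 * (-p - 1) + 1) = N (2 * (-p) + 1) - PowerSeries.X * N (2 * (-p)) := by
          rw [this]; ring
        rw [h', ho, he]
        have := psi_step (-p - 1)
        have e7 : (-p : ℤ) - 1 + 1 = -p := by ring
        rw [e7] at this
        rw [this]; ring
      refine ⟨?_, hNo⟩
      have h' : N (2 * (-p - 1)) = N (2 * (-p)) - PowerSeries.X * N (2 * (-p - 1) + 1) := by
        have := sub_eq_iff_eq_add.mp r2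
        rw [this]; ring
      rw [h', he, hNo]
      have := phi_step (-p - 1)
      have e7 : (-p : ℤ) - 1 + 1 = -p := by ring
      rw [e7] at this
      rw [this]; ring
  exact fun p => (key p).1
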